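/- Let d ≥ 1 be an integer and α ∈ ℝ. The function c_{d,α} is bounded on [0, ∞) if and only if α = 1 when d is even, respectively α = π/2 when d is odd. -/

import Mathlib

/-!
Write `d = k + 1` and `I(n, k) = ∫₀^{π/2} sinⁿ θ cosᵏ θ dθ`. Expanding the exponential,
`∫₀^{π/2} exp (s sin θ) cosᵏ θ dθ = Σ sⁿ/n! · I(n, k)`, and the reduction formula
`(n + k + 2) I(n + 2, k) = (n + 1) I(n, k)` shows that the odd coefficients are `d‼/d` times
those of the odd series in `c_{d,α}` and the even ones `I(0, k) k‼` times those of the even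
series. Since `I(0, k) = I(k, 0)` is a Wallis integral, `I(0, k) k‼ = α₀ d‼/d` with `α₀ = 1` for
`d` even and `α₀ = π/2` for `d` odd. Hence `c_{d,α₀}(t) = ∫₀^{π/2} exp (-t sin θ) cosᵏ θ dθ`
lies in `[0, π/2]` for `t ≥ 0`, while `c_{d,α} - c_{d,α₀}` is `(α - α₀) d‼/d` times the even
series, which has positive coefficients and so is unbounded.
-/

open scoped Nat

/-- The function `c_{d,α}` of the paper: the candidate (rescaled radial profile of the)
Weyl symbol of the inverse of the harmonic oscillator, depending on a parameter `α`. -/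
noncomputable def cda (d : ℕ) (α : ℝ) (t : ℝ) : ℝ :=
  ((d‼ : ℝ) / d) *
    (α * (∑' p : ℕ, t ^ (2*p) / (((2*p)‼ * (2*p + d - 1)‼ : ℕ) : ℝ)) -
      ∑' p : ℕ, t ^ (2*p+1) / (((2*p+1)‼ * (2*p + d)‼ : ℕ) : ℝ))

open Real Filter

noncomputable def sinCosMoment (n k : ℕ) : ℝ := ∫ θ in (0:ℝ)..(π / 2), sin θ ^ n * cos θ ^ k

theorem sinCosMoment_add_two (n k : ℕ) :
    (n + k + 2 : ℝ) * sinCosMoment (n + 2) k = (n + 1) * sinCosMoment n k := by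
  have hderiv : ∀ x ∈ Set.uIcc (0:ℝ) (π / 2),
      HasDerivAt (fun θ => sin θ ^ (n + 1) * cos θ ^ (k + 1))
        ((n + 1) * (sin x ^ n * cos x ^ k) - (n + k + 2) * (sin x ^ (n + 2) * cos x ^ k)) x := by
    intro x _
    refine (((hasDerivAt_sin x).pow (n + 1)).mul ((hasDerivAt_cos x).pow (k + 1))).congr_deriv ?_
    simp only [Pi.pow_apply, Nat.add_sub_cancel, Nat.cast_add, Nat.cast_one]
    linear_combination (n + 1 : ℝ) * sin x ^ n * cos x ^ k * sin_sq_add_cos_sq x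
  have := intervalIntegral.integral_eq_sub_of_hasDerivAt hderiv (by
    apply Continuous.intervalIntegrable; fun_prop)
  rw [intervalIntegral.integral_sub (by apply Continuous.intervalIntegrable; fun_prop)
    (by apply Continuous.intervalIntegrable; fun_prop), intervalIntegral.integral_const_mul,
    intervalIntegral.integral_const_mul] at this
  simp [cos_pi_div_two] at this
  unfold sinCosMoment
  linarith

theorem sinCosMoment_one (k : ℕ) : sinCosMoment 1 k = 1 / (k + 1) := by
  have := integral_sin_pow_odd_mul_cos_pow (a := 0) (b := π / 2) 0 k
  simp only [mul_zero, zero_add, pow_one, pow_zero, mul_one, cos_pi_div_two, cos_zero] at this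
  simp only [sinCosMoment, pow_one]
  rw [this, integral_pow]
  simp

theorem sinCosMoment_zero_left (k : ℕ) : sinCosMoment 0 k = sinCosMoment k 0 := by
  simpa [sinCosMoment, sin_pi_div_two_sub] using
    (intervalIntegral.integral_comp_sub_left (fun θ => sin θ ^ k) (π / 2) (a := 0) (b := π / 2))

noncomputable def normalizedMoment (n k : ℕ) : ℝ := sinCosMoment n k / n ! * (n‼ * (n + k)‼)

theorem normalizedMoment_add_two (n k : ℕ) : normalizedMoment (n + 2) k = normalizedMoment n k := by
  have h := sinCosMoment_add_two n k
  simp only [normalizedMoment, show n + 2 + k = n + k + 2 by ring, Nat.doubleFactorial_add_two,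
    Nat.factorial_succ]
  push_cast
  field_simp
  linear_combination (n + 2 : ℝ) * h

theorem normalizedMoment_add_two_mul (n k m : ℕ) :
    normalizedMoment (n + 2 * m) k = normalizedMoment n k := by
  induction m with
  | zero => rfl
  | succ m ih => rw [← ih, mul_add_one, ← add_assoc, normalizedMoment_add_two]

theorem normalizedMoment_zero_right (k : ℕ) :
    normalizedMoment k 0 = if Even k then π / 2 else 1 := by
  obtain ⟨m, rfl | rfl⟩ := Nat.even_or_odd' k
  · rw [if_pos (even_two_mul m), ← zero_add (2 * m), normalizedMoment_add_two_mul]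
    simp [normalizedMoment, sinCosMoment]
  · rw [if_neg (Nat.not_even_two_mul_add_one m), add_comm, normalizedMoment_add_two_mul]
    simp [normalizedMoment, sinCosMoment_one]

theorem sinCosMoment_zero_mul_doubleFactorial (k : ℕ) :
    sinCosMoment 0 k * k‼ = (if Even k then π / 2 else 1) * (k + 1)‼ / (k + 1) := by
  have hfac : (k ! : ℝ) * (k + 1) = (k + 1)‼ * k‼ := by
    rw [mul_comm]
    exact_mod_cast (Nat.factorial_succ k).symm.trans (Nat.factorial_eq_mul_doubleFactorial k)
  rw [← normalizedMoment_zero_right, normalizedMoment, sinCosMoment_zero_left, add_zero]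
  field_simp
  linear_combination sinCosMoment k 0 * hfac

theorem sinCosMoment_two_mul_div_factorial (k p : ℕ) :
    sinCosMoment (2 * p) k / (2 * p)! =
      sinCosMoment 0 k * k‼ / (((2 * p)‼ * (2 * p + k)‼ : ℕ) : ℝ) := by
  have h := normalizedMoment_add_two_mul 0 k p
  simp only [normalizedMoment, zero_add, Nat.factorial_zero, Nat.doubleFactorial,
    Nat.cast_one, div_one, one_mul] at h
  have : (0 : ℝ) < (((2 * p)‼ * (2 * p + k)‼ : ℕ) : ℝ) := by
    exact_mod_cast Nat.mul_pos (Nat.doubleFactorial_pos _) (Nat.doubleFactorial_pos _)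
  rw [eq_div_iff this.ne', ← h]
  push_cast
  ring

theorem sinCosMoment_two_mul_add_one_div_factorial (k p : ℕ) :
    sinCosMoment (2 * p + 1) k / (2 * p + 1)! =
      (k + 1)‼ / (k + 1) / (((2 * p + 1)‼ * (2 * p + (k + 1))‼ : ℕ) : ℝ) := by
  have h := normalizedMoment_add_two_mul 1 k p
  simp only [normalizedMoment, sinCosMoment_one, add_comm 1 (2 * p), add_comm 1 k,
    Nat.factorial_one, Nat.doubleFactorial, Nat.cast_one, div_one, one_mul] at h
  have : (0 : ℝ) < (((2 * p + 1)‼ * (2 * p + (k + 1))‼ : ℕ) : ℝ) := by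
    exact_mod_cast Nat.mul_pos (Nat.doubleFactorial_pos _) (Nat.doubleFactorial_pos _)
  rw [eq_div_iff this.ne', Nat.cast_mul, show 2 * p + (k + 1) = 2 * p + 1 + k by ring, h]
  ring

noncomputable def expSinIntegral (k : ℕ) (s : ℝ) : ℝ :=
  ∫ θ in (0:ℝ)..(π / 2), exp (s * sin θ) * cos θ ^ k

theorem hasSum_expSinIntegral (k : ℕ) (s : ℝ) :
    HasSum (fun n => s ^ n / n ! * sinCosMoment n k) (expSinIntegral k s) := by
  have hbound : ∀ n θ, ‖s ^ n / n ! * (sin θ ^ n * cos θ ^ k)‖ ≤ |s| ^ n / n ! := by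
    intro n θ
    rw [norm_mul, Real.norm_eq_abs, abs_div, abs_pow, Nat.abs_cast]
    refine mul_le_of_le_one_right (by positivity) ?_
    rw [Real.norm_eq_abs, abs_mul, abs_pow, abs_pow]
    exact mul_le_one₀ (pow_le_one₀ (abs_nonneg _) (abs_sin_le_one θ)) (by positivity)
      (pow_le_one₀ (abs_nonneg _) (abs_cos_le_one θ))
  have := intervalIntegral.hasSum_integral_of_dominated_convergence
    (a := 0) (b := π / 2) (f := fun θ => exp (s * sin θ) * cos θ ^ k)
    (F := fun n θ => s ^ n / n ! * (sin θ ^ n * cos θ ^ k))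
    (fun n _ => |s| ^ n / n !) (fun n => by fun_prop)
    (fun n => .of_forall fun θ _ => hbound n θ)
    (.of_forall fun _ _ => Real.summable_pow_div_factorial |s|)
    (intervalIntegrable_const (μ := MeasureTheory.volume))
    (.of_forall fun θ _ => ?_)
  · simpa only [sinCosMoment, expSinIntegral, intervalIntegral.integral_const_mul] using this
  · have hexp := NormedSpace.expSeries_div_hasSum_exp (s * sin θ)
    rw [← Real.exp_eq_exp_ℝ] at hexp
    simpa only [mul_pow, mul_div_right_comm, mul_assoc] using hexp.mul_right (cos θ ^ k)

theorem expSinIntegral_nonneg (k : ℕ) (s : ℝ) : 0 ≤ expSinIntegral k s := by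
  refine intervalIntegral.integral_nonneg (by positivity) fun θ hθ => ?_
  have := cos_nonneg_of_mem_Icc ⟨by linarith [hθ.1, pi_pos], hθ.2⟩
  positivity

theorem expSinIntegral_le {s : ℝ} (hs : s ≤ 0) (k : ℕ) : expSinIntegral k s ≤ π / 2 := by
  have h := intervalIntegral.integral_mono_on pi_div_two_pos.le
    (f := fun θ => exp (s * sin θ) * cos θ ^ k) (g := fun _ => (1 : ℝ))
    (by apply Continuous.intervalIntegrable; fun_prop)
    (intervalIntegrable_const (μ := MeasureTheory.volume)) fun θ hθ => ?_
  · simpa [expSinIntegral] using h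
  have hsin := sin_nonneg_of_nonneg_of_le_pi hθ.1 (by linarith [hθ.2, pi_pos])
  have hcos := cos_nonneg_of_mem_Icc ⟨by linarith [hθ.1, pi_pos], hθ.2⟩
  exact mul_le_one₀ (exp_le_one_iff.2 (mul_nonpos_of_nonpos_of_nonneg hs hsin)) (by positivity)
    (pow_le_one₀ hcos (cos_le_one θ))

noncomputable def cdaEven (d : ℕ) (t : ℝ) : ℝ :=
  ∑' p : ℕ, t ^ (2 * p) / (((2 * p)‼ * (2 * p + d - 1)‼ : ℕ) : ℝ)

noncomputable def cdaOdd (d : ℕ) (t : ℝ) : ℝ :=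
  ∑' p : ℕ, t ^ (2 * p + 1) / (((2 * p + 1)‼ * (2 * p + d)‼ : ℕ) : ℝ)

theorem cda_eq (d : ℕ) (α t : ℝ) : cda d α t = d‼ / d * (α * cdaEven d t - cdaOdd d t) := rfl

theorem cda_sub_cda (d : ℕ) (α β t : ℝ) :
    cda d α t - cda d β t = d‼ / d * (α - β) * cdaEven d t := by
  rw [cda_eq, cda_eq]
  ring

theorem cdaEven_neg (d : ℕ) (t : ℝ) : cdaEven d (-t) = cdaEven d t := by
  simp only [cdaEven, pow_mul, neg_sq]

theorem cdaOdd_neg (d : ℕ) (t : ℝ) : cdaOdd d (-t) = -cdaOdd d t := by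
  simp only [cdaOdd, (Odd.neg_pow ⟨_, rfl⟩ t), neg_div, tsum_neg]

theorem pow_div_factorial_mul_sinCosMoment_two_mul (k p : ℕ) (s : ℝ) :
    s ^ (2 * p) / (2 * p)! * sinCosMoment (2 * p) k =
      sinCosMoment 0 k * k‼ * (s ^ (2 * p) / (((2 * p)‼ * (2 * p + (k + 1) - 1)‼ : ℕ) : ℝ)) := by
  rw [div_mul_comm, sinCosMoment_two_mul_div_factorial, ← add_assoc, Nat.add_sub_cancel]
  ring

theorem pow_div_factorial_mul_sinCosMoment_two_mul_add_one (k p : ℕ) (s : ℝ) :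
    s ^ (2 * p + 1) / (2 * p + 1)! * sinCosMoment (2 * p + 1) k =
      (k + 1)‼ / (k + 1) * (s ^ (2 * p + 1) / (((2 * p + 1)‼ * (2 * p + (k + 1))‼ : ℕ) : ℝ)) := by
  rw [div_mul_comm, sinCosMoment_two_mul_add_one_div_factorial]
  ring

theorem expSinIntegral_eq_cdaEven_add_cdaOdd (k : ℕ) (s : ℝ) :
    expSinIntegral k s = sinCosMoment 0 k * k‼ * cdaEven (k + 1) s +
      (k + 1)‼ / (k + 1) * cdaOdd (k + 1) s := by
  have h := hasSum_expSinIntegral k s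
  rw [← h.tsum_eq, ← tsum_even_add_odd (f := fun n => s ^ n / n ! * sinCosMoment n k)
    (h.summable.comp_injective (mul_right_injective₀ two_ne_zero))
    (h.summable.comp_injective ((add_left_injective 1).comp (mul_right_injective₀ two_ne_zero)))]
  simp only [pow_div_factorial_mul_sinCosMoment_two_mul,
    pow_div_factorial_mul_sinCosMoment_two_mul_add_one, tsum_mul_left, cdaEven, cdaOdd]

theorem cda_eq_expSinIntegral_neg (k : ℕ) (t : ℝ) :
    cda (k + 1) (if Even (k + 1) then 1 else π / 2) t = expSinIntegral k (-t) := by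
  have h := sinCosMoment_zero_mul_doubleFactorial k
  have hα : (if Even (k + 1) then (1 : ℝ) else π / 2) = if Even k then π / 2 else 1 := by
    by_cases hk : Even k <;> simp [hk, Nat.even_add_one]
  rw [hα, cda_eq, expSinIntegral_eq_cdaEven_add_cdaOdd, cdaEven_neg, cdaOdd_neg]
  push_cast
  rw [h]
  ring

theorem summable_cdaEven (k : ℕ) (t : ℝ) :
    Summable fun p => t ^ (2 * p) / (((2 * p)‼ * (2 * p + (k + 1) - 1)‼ : ℕ) : ℝ) := by
  have hκ : sinCosMoment 0 k * k‼ ≠ 0 := by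
    rw [sinCosMoment_zero_mul_doubleFactorial]
    split_ifs <;> positivity
  have h := (hasSum_expSinIntegral k t).summable.comp_injective (mul_right_injective₀ two_ne_zero)
  simp only [Function.comp_def, pow_div_factorial_mul_sinCosMoment_two_mul] at h
  exact (summable_mul_left_iff hκ).1 h

theorem tendsto_cdaEven_atTop (k : ℕ) : Tendsto (cdaEven (k + 1)) atTop atTop := by
  have hc : (0 : ℝ) < (((2 * 1)‼ * (2 * 1 + (k + 1) - 1)‼ : ℕ) : ℝ) := by positivity
  refine tendsto_atTop_mono (fun t => ?_) ((tendsto_pow_atTop two_ne_zero).atTop_div_const hc)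
  exact (summable_cdaEven k t).le_tsum 1 fun p _ =>
    div_nonneg ((even_two_mul p).pow_nonneg t) (Nat.cast_nonneg _)

theorem stmt7 (d : ℕ) (hd : 1 ≤ d) (α : ℝ) :
    (∃ M : ℝ, ∀ t : ℝ, 0 ≤ t → |cda d α t| ≤ M) ↔
      α = (if Even d then (1 : ℝ) else Real.pi / 2) := by
  obtain ⟨k, rfl⟩ : ∃ k, d = k + 1 := ⟨d - 1, by omega⟩
  set αc : ℝ := if Even (k + 1) then 1 else π / 2
  have hcrit : ∀ t, 0 ≤ t → |cda (k + 1) αc t| ≤ π / 2 := fun t ht => by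
    rw [cda_eq_expSinIntegral_neg, abs_of_nonneg (expSinIntegral_nonneg _ _)]
    exact expSinIntegral_le (neg_nonpos.2 ht) k
  refine ⟨fun ⟨M, hM⟩ => ?_, fun h => ⟨π / 2, h ▸ hcrit⟩⟩
  by_contra hne
  set c : ℝ := ((k + 1 : ℕ)‼ : ℝ) / (k + 1 : ℕ) * (α - αc)
  have hc : 0 < |c| := abs_pos.2 (mul_ne_zero (by positivity) (sub_ne_zero.2 hne))
  obtain ⟨t, hlarge, ht⟩ := (((tendsto_cdaEven_atTop k).const_mul_atTop hc).eventually_gt_atTop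
    (M + π / 2)).and (eventually_ge_atTop 0) |>.exists
  have hsmall : |c| * cdaEven (k + 1) t ≤ M + π / 2 := calc
    _ ≤ |c * cdaEven (k + 1) t| := by
      rw [abs_mul c]
      exact mul_le_mul_of_nonneg_left (le_abs_self _) hc.le
    _ = |cda (k + 1) α t - cda (k + 1) αc t| := by rw [cda_sub_cda]
    _ ≤ |cda (k + 1) α t| + |cda (k + 1) αc t| := abs_sub _ _
    _ ≤ M + π / 2 := add_le_add (hM t ht) (hcrit t ht)
  exact (hlarge.trans_le hsmall).false
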